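/- Let n ≥ 2. For any two injective group homomorphisms φ, ψ : DihedralGroup n → O(2), there exist a group automorphism θ of DihedralGroup n and a 2×2 real orthogonal matrix P with det P = 1 such that ψ(g) = P⁻¹·φ(θ(g))·P for all g ∈ DihedralGroup n. (The automorphism group of the dihedral group acts transitively on SO(2)-conjugacy classes of faithful orthogonal representations on ℝ².) -/

import Mathlib

/-!
Up to an automorphism of the dihedral group, a faithful representation `ρ` sends `r 1` into
SO(2): for `n ≥ 3` this is automatic, because elements of determinant `-1` are involutions, and
for `n = 2` the automorphisms of the Klein four-group permute its non-trivial elements, one of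
which has determinant `1`. Then `ρ (sr 0)` is a reflection, as SO(2) is abelian and `r 1` does
not commute with `sr 0` unless `n = 2`, where SO(2) has a single element of order 2.

Identifying SO(2) with the unit circle in `ℂ`, the images of `r 1` under two faithful
representations are primitive `n`-th roots of unity, hence one is the `k`-th power of the other
with `k` prime to `n`; the automorphism `r i ↦ r (k i)`, `sr i ↦ sr (k i)` absorbs this. Finally,
if `s`, `s'` are the two (reflection) images of `sr 0`, a rotation `q` with `q² = s s'` satisfies
`q⁻¹ s q = s'` and commutes with the images of `r 1`.
-/

open Complex DihedralGroup

local notation "M₂" => Matrix (Fin 2) (Fin 2) ℝ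
local notation "O₂" => Matrix.orthogonalGroup (Fin 2) ℝ

namespace Matrix

theorem det_eq_one_or_neg_one_of_mem_orthogonalGroup {n R : Type*} [Fintype n] [DecidableEq n]
    [CommRing R] [NoZeroDivisors R] {M : Matrix n n R} (hM : M ∈ orthogonalGroup n R) :
    M.det = 1 ∨ M.det = -1 := by
  have h := congrArg det ((mem_orthogonalGroup_iff _ _).mp hM)
  rw [det_mul, det_transpose, det_one] at h
  exact mul_self_eq_one_iff.mp h

theorem mul_self_eq_one_of_mem_orthogonalGroup_of_det_eq_neg_one {R : Type*} [CommRing R]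
    {M : Matrix (Fin 2) (Fin 2) R} (hM : M ∈ orthogonalGroup (Fin 2) R) (hdet : M.det = -1) :
    M * M = 1 := by
  have h := (mem_orthogonalGroup_iff _ _).mp hM
  have h₁₀ := congrFun (congrFun h 1) 0
  have h₁₁ := congrFun (congrFun h 1) 1
  simp only [mul_apply, Fin.sum_univ_two, transpose_apply, one_apply_eq, one_apply_ne,
    ne_eq, one_ne_zero, not_false_eq_true] at h₁₀ h₁₁
  rw [det_fin_two] at hdet
  have hsymm : Mᵀ = M := by
    ext i j
    fin_cases i <;> fin_cases j <;> simp only [transpose_apply, Fin.zero_eta, Fin.mk_one]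
    · linear_combination -M 1 1 * h₁₀ + M 0 1 * h₁₁ + M 1 0 * hdet
    · linear_combination M 1 1 * h₁₀ - M 0 1 * h₁₁ - M 1 0 * hdet
  calc M * M = M * Mᵀ := by rw [hsymm]
    _ = 1 := h

theorem exists_eq_leftMulMatrix_complex_of_mem_specialOrthogonalGroup
    {M : Matrix (Fin 2) (Fin 2) ℝ} (hM : M ∈ specialOrthogonalGroup (Fin 2) ℝ) :
    ∃ z : ℂ, M = Algebra.leftMulMatrix basisOneI z := by
  obtain ⟨h₀₀, h₀₁, -⟩ := mem_specialOrthogonalGroup_fin_two_iff.mp hM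
  refine ⟨⟨M 0 0, M 1 0⟩, ?_⟩
  rw [Algebra.leftMulMatrix_complex]
  ext i j
  fin_cases i <;> fin_cases j <;> simp [h₀₀, h₀₁]

theorem leftMulMatrix_complex_mem_specialOrthogonalGroup_iff {z : ℂ} :
    Algebra.leftMulMatrix basisOneI z ∈ specialOrthogonalGroup (Fin 2) ℝ ↔ normSq z = 1 := by
  rw [Algebra.leftMulMatrix_complex, of_mem_specialOrthogonalGroup_fin_two_iff, normSq_apply]
  simp [sq]

end Matrix

theorem inv_mul_mul_eq_of_mul_self_eq {G : Type*} [Group G] {s s' q : G}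
    (hsq : s * q = q⁻¹ * s) (hq : q * q = s * s') (hs' : s' * s' = 1) : q⁻¹ * s * q = s' :=
  calc q⁻¹ * s * q = (q * q)⁻¹ * s := by rw [mul_assoc, hsq, mul_inv_rev, mul_assoc]
    _ = s' := by rw [hq, mul_inv_rev, inv_mul_cancel_right, inv_eq_of_mul_eq_one_right hs']

namespace Matrix.OrthogonalGroup

open Matrix

variable {a b q s : O₂}

theorem coe_inv (a : O₂) : ((a⁻¹ : O₂) : M₂) = (a : M₂)⁻¹ :=
  (inv_eq_left_inv (congrArg Subtype.val (inv_mul_cancel a))).symm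

theorem det_eq_one_or_neg_one (a : O₂) : (a : M₂).det = 1 ∨ (a : M₂).det = -1 :=
  det_eq_one_or_neg_one_of_mem_orthogonalGroup a.2

theorem mul_self_eq_one_of_det_eq_neg_one (hs : (s : M₂).det = -1) : s * s = 1 :=
  Subtype.ext (mul_self_eq_one_of_mem_orthogonalGroup_of_det_eq_neg_one s.2 hs)

theorem exists_coe_eq_leftMulMatrix_complex (ha : (a : M₂).det = 1) :
    ∃ z : ℂ, (a : M₂) = Algebra.leftMulMatrix basisOneI z :=
  exists_eq_leftMulMatrix_complex_of_mem_specialOrthogonalGroup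
    ((mem_specialOrthogonalGroup_iff).mpr ⟨a.2, ha⟩)

theorem commute_of_det_eq_one (ha : (a : M₂).det = 1) (hb : (b : M₂).det = 1) :
    Commute a b := by
  obtain ⟨z, hz⟩ := exists_coe_eq_leftMulMatrix_complex ha
  obtain ⟨w, hw⟩ := exists_coe_eq_leftMulMatrix_complex hb
  refine Subtype.ext ?_
  simp only [Submonoid.coe_mul, hz, hw, ← map_mul, mul_comm]

theorem mul_eq_inv_mul_of_det (hs : (s : M₂).det = -1) (hq : (q : M₂).det = 1) :
    s * q = q⁻¹ * s := by
  have hsq : (s * q : M₂).det = -1 := by rw [det_mul, hs, hq, mul_one]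
  calc s * q = (s * q)⁻¹ := eq_inv_of_mul_eq_one_left (mul_self_eq_one_of_det_eq_neg_one hsq)
    _ = q⁻¹ * s := by
      rw [_root_.mul_inv_rev, inv_eq_of_mul_eq_one_right (mul_self_eq_one_of_det_eq_neg_one hs)]

theorem exists_mul_self_eq (ha : (a : M₂).det = 1) :
    ∃ q : O₂, (q : M₂).det = 1 ∧ q * q = a := by
  obtain ⟨z, hz⟩ := exists_coe_eq_leftMulMatrix_complex ha
  obtain ⟨u, rfl⟩ := IsAlgClosed.exists_eq_mul_self z
  have hz₁ : normSq (u * u) = 1 := leftMulMatrix_complex_mem_specialOrthogonalGroup_iff.mp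
    (hz ▸ (mem_specialOrthogonalGroup_iff).mpr ⟨a.2, ha⟩)
  have hu : Algebra.leftMulMatrix basisOneI u ∈ specialOrthogonalGroup (Fin 2) ℝ := by
    rw [leftMulMatrix_complex_mem_specialOrthogonalGroup_iff]
    rw [map_mul, ← sq] at hz₁
    exact (pow_eq_one_iff_of_nonneg (normSq_nonneg u) two_ne_zero).mp hz₁
  exact ⟨⟨_, hu.1⟩, hu.2, Subtype.ext (by simp [hz])⟩

theorem exists_coprime_pow_eq {n : ℕ} [NeZero n] (ha : (a : M₂).det = 1)
    (hb : (b : M₂).det = 1) (hao : orderOf a = n) (hbo : orderOf b = n) :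
    ∃ k : ℕ, k.Coprime n ∧ b = a ^ k := by
  obtain ⟨z, hz⟩ := exists_coe_eq_leftMulMatrix_complex ha
  obtain ⟨w, hw⟩ := exists_coe_eq_leftMulMatrix_complex hb
  have orderOf_eq {c : O₂} {x : ℂ} (h : (c : M₂) = Algebra.leftMulMatrix basisOneI x) :
      orderOf c = orderOf x := by
    rw [← orderOf_submonoid, h]
    exact orderOf_injective (Algebra.leftMulMatrix basisOneI : ℂ →* M₂)
      (Algebra.leftMulMatrix_injective _) x
  have hzn : IsPrimitiveRoot z n := hao ▸ orderOf_eq hz ▸ IsPrimitiveRoot.orderOf z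
  have hwn : IsPrimitiveRoot w n := hbo ▸ orderOf_eq hw ▸ IsPrimitiveRoot.orderOf w
  obtain ⟨k, -, rfl⟩ := hzn.eq_pow_of_pow_eq_one hwn.pow_eq_one
  refine ⟨k, (hzn.pow_iff_coprime (NeZero.pos n) k).mp hwn, Subtype.ext ?_⟩
  rw [hw, SubmonoidClass.coe_pow, hz, map_pow]

end Matrix.OrthogonalGroup

namespace DihedralGroup

variable {n : ℕ}

theorem monoidHom_ext {G : Type*} [Group G] {f g : DihedralGroup n →* G}
    (hr : f (r 1) = g (r 1)) (hs : f (sr 0) = g (sr 0)) : f = g := by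
  have hr' (i : ZMod n) : f (r i) = g (r i) := by
    rw [← ZMod.intCast_zmod_cast i, ← r_one_zpow, map_zpow, map_zpow, hr]
  ext (i | i)
  · exact hr' i
  · rw [← zero_add i, ← sr_mul_r, map_mul, map_mul, hs, hr']

def mulAutOfUnit (u : (ZMod n)ˣ) : MulAut (DihedralGroup n) where
  toFun
    | r i => r (u * i)
    | sr i => sr (u * i)
  invFun
    | r i => r (↑u⁻¹ * i)
    | sr i => sr (↑u⁻¹ * i)
  left_inv := by rintro (i | i) <;> simp [← mul_assoc]
  right_inv := by rintro (i | i) <;> simp [← mul_assoc]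
  map_mul' := by rintro (i | i) (j | j) <;> simp [mul_add, mul_sub]

@[simp]
theorem mulAutOfUnit_r (u : (ZMod n)ˣ) (i : ZMod n) :
    mulAutOfUnit u (r i) = r ((u : ZMod n) * i) := rfl

@[simp]
theorem mulAutOfUnit_sr (u : (ZMod n)ˣ) (i : ZMod n) :
    mulAutOfUnit u (sr i) = sr ((u : ZMod n) * i) := rfl

/-- A transposition of two non-trivial elements of the Klein four-group is an automorphism. -/
theorem exists_mulAut_two_apply_r_one {x : DihedralGroup 2} (hx : x ≠ 1) :
    ∃ θ : MulAut (DihedralGroup 2), θ (r 1) = x :=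
  ⟨{ Equiv.swap (r 1) x with map_mul' := by revert x; decide }, Equiv.swap_apply_left _ _⟩

end DihedralGroup

namespace Matrix.OrthogonalGroup

variable {n : ℕ} {ρ ρ' : DihedralGroup n →* O₂}

theorem exists_mulAut_det_r_one (hρ : Function.Injective ρ) :
    ∃ θ : MulAut (DihedralGroup n), (ρ (θ (r 1)) : M₂).det = 1 := by
  rcases det_eq_one_or_neg_one (ρ (r 1)) with h | h
  · exact ⟨1, h⟩
  have hsq : (r 1 : DihedralGroup n) ^ 2 = 1 :=
    hρ (by rw [map_pow, map_one, sq, mul_self_eq_one_of_det_eq_neg_one h])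
  have hn : n ∣ 2 := orderOf_r_one (n := n) ▸ orderOf_dvd_of_pow_eq_one hsq
  rcases (Nat.dvd_prime Nat.prime_two).mp hn with rfl | rfl
  · rw [show (r 1 : DihedralGroup 1) = 1 by decide, map_one] at h
    norm_num at h
  rcases det_eq_one_or_neg_one (ρ (sr 0)) with h₀ | h₀
  · obtain ⟨θ, hθ⟩ := exists_mulAut_two_apply_r_one (x := sr 0) (by decide)
    exact ⟨θ, hθ ▸ h₀⟩
  · obtain ⟨θ, hθ⟩ := exists_mulAut_two_apply_r_one (x := sr 1) (by decide)
    refine ⟨θ, ?_⟩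
    rw [hθ, show (sr 1 : DihedralGroup 2) = r 1 * sr 0 by decide, map_mul, Submonoid.coe_mul,
      det_mul, h, h₀]
    norm_num

theorem det_sr_zero_eq_neg_one (hn : 2 ≤ n) (hρ : Function.Injective ρ)
    (hr : (ρ (r 1) : M₂).det = 1) : (ρ (sr 0) : M₂).det = -1 := by
  refine (det_eq_one_or_neg_one _).resolve_left fun hs => ?_
  have hcomm : sr 0 * r 1 = r 1 * sr (0 : ZMod n) :=
    hρ (by simpa only [map_mul] using (commute_of_det_eq_one hs hr).eq)
  rw [sr_mul_r, r_mul_sr, sr.injEq] at hcomm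
  have h2 : ((2 : ℕ) : ZMod n) = 0 := by push_cast; linear_combination hcomm
  obtain rfl : n = 2 := by
    have := Nat.le_of_dvd two_pos ((ZMod.natCast_eq_zero_iff 2 n).mp h2)
    omega
  obtain ⟨k, -, hk⟩ := exists_coprime_pow_eq hr hs
    (by rw [orderOf_injective ρ hρ, orderOf_r_one]) (by rw [orderOf_injective ρ hρ, orderOf_sr])
  rw [← map_pow, r_one_pow] at hk
  cases hρ hk

theorem exists_mulAut_conj_of_det_r_one (hn : 2 ≤ n) (hρ : Function.Injective ρ)
    (hρ' : Function.Injective ρ') (hr : (ρ (r 1) : M₂).det = 1) (hr' : (ρ' (r 1) : M₂).det = 1) :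
    ∃ θ : MulAut (DihedralGroup n), ∃ q : O₂, (q : M₂).det = 1 ∧
      ∀ g, ρ' g = q⁻¹ * ρ (θ g) * q := by
  have : NeZero n := ⟨by omega⟩
  obtain ⟨k, hk, hρk⟩ := exists_coprime_pow_eq hr hr'
    (by rw [orderOf_injective ρ hρ, orderOf_r_one])
    (by rw [orderOf_injective ρ' hρ', orderOf_r_one])
  set θ := mulAutOfUnit (ZMod.unitOfCoprime k hk)
  have hθr : ρ (θ (r 1)) = ρ' (r 1) := by
    rw [hρk, ← map_pow, r_one_pow]
    simp [θ]
  have hθs : θ (sr 0) = sr 0 := by simp [θ]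
  have hs := det_sr_zero_eq_neg_one hn hρ hr
  have hs' := det_sr_zero_eq_neg_one hn hρ' hr'
  obtain ⟨q, hq, hqq⟩ := exists_mul_self_eq (a := ρ (sr 0) * ρ' (sr 0))
    (by rw [Submonoid.coe_mul, det_mul, hs, hs']; norm_num)
  refine ⟨θ, q, hq, fun g => ?_⟩
  suffices ρ' = (MulAut.conj q⁻¹).toMonoidHom.comp (ρ.comp θ.toMonoidHom) by
    rw [this]; simp
  refine DihedralGroup.monoidHom_ext ?_ ?_
  all_goals simp only [MonoidHom.comp_apply, MulEquiv.coe_toMonoidHom, MulAut.conj_apply, inv_inv]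
  · rw [hθr, mul_assoc, ← (commute_of_det_eq_one hq hr').eq, inv_mul_cancel_left]
  · rw [hθs]
    exact (inv_mul_mul_eq_of_mul_self_eq (mul_eq_inv_mul_of_det hs hq) hqq
      (mul_self_eq_one_of_det_eq_neg_one hs')).symm

end Matrix.OrthogonalGroup

theorem stmt_15 (n : ℕ) (hn : 2 ≤ n)
    (φ ψ : DihedralGroup n →* Matrix.orthogonalGroup (Fin 2) ℝ)
    (hφ : Function.Injective φ) (hψ : Function.Injective ψ) :
    ∃ θ : MulAut (DihedralGroup n), ∃ P : Matrix (Fin 2) (Fin 2) ℝ,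
      P ∈ Matrix.orthogonalGroup (Fin 2) ℝ ∧ P.det = 1 ∧
      ∀ g : DihedralGroup n,
        (ψ g : Matrix (Fin 2) (Fin 2) ℝ) = P⁻¹ * (φ (θ g) : Matrix (Fin 2) (Fin 2) ℝ) * P := by
  obtain ⟨θ₁, hθ₁⟩ := Matrix.OrthogonalGroup.exists_mulAut_det_r_one hφ
  obtain ⟨θ₂, hθ₂⟩ := Matrix.OrthogonalGroup.exists_mulAut_det_r_one hψ
  obtain ⟨θ, q, hq, hconj⟩ := Matrix.OrthogonalGroup.exists_mulAut_conj_of_det_r_one hn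
    (ρ := φ.comp θ₁.toMonoidHom) (ρ' := ψ.comp θ₂.toMonoidHom)
    (hφ.comp θ₁.injective) (hψ.comp θ₂.injective) hθ₁ hθ₂
  refine ⟨θ₁ * θ * θ₂⁻¹, q, q.2, hq, fun g => ?_⟩
  have := congrArg Subtype.val (hconj (θ₂⁻¹ g))
  rw [← Matrix.OrthogonalGroup.coe_inv]
  simpa using this
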